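/- In the category LRF of labeled rooted forests, every morphism (C₁, C₂, f) : F₁ → F₂ (where C_i is an admissible cut of F_i and f : R_{C₁}(F₁) ≅ P_{C₂}(F₂) is an isomorphism) has a kernel, given by the inclusion (C_null, C₁, id) : P_{C₁}(F₁) → F₁. -/

import Mathlib

attribute [local instance] Classical.propDecidable

noncomputable section

/-- A labeled rooted forest: a finite set of vertex labels together with a
parent function (`none` = root), acyclic via a depth function. -/
structure Forest where
  verts : Finset ℕ
  parent : ℕ → Option ℕ
  parent_mem : ∀ v ∈ verts, ∀ p, parent v = some p → p ∈ verts
  wf : ∃ d : ℕ → ℕ, ∀ v ∈ verts, ∀ p, parent v = some p → d p < d v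

namespace Forest

/-- `S` is the vertex set of a subforest of `F` (the branches `P_C(F)` severed by an
admissible cut `C`): a subset of the vertices closed under passing to children. -/
def IsSub (F : Forest) (S : Finset ℕ) : Prop :=
  S ⊆ F.verts ∧ ∀ v ∈ S, ∀ w ∈ F.verts, F.parent w = some v → w ∈ S

/-- The subforest `P_C(F)` determined by the (descendant-closed) vertex set `S`. -/
def restrict (F : Forest) (S : Finset ℕ) : Forest where
  verts := S ∩ F.verts
  parent v := (F.parent v).bind fun p =>
    if v ∈ S ∩ F.verts ∧ p ∈ S ∩ F.verts then some p else none
  parent_mem := by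
    intro v hv p hp
    beta_reduce at hp
    cases h : F.parent v with
    | none => rw [h] at hp; simp at hp
    | some q =>
      rw [h] at hp
      simp only [Option.bind_some] at hp
      split at hp
      · rename_i hc; cases hp; exact hc.2
      · simp at hp
  wf := by
    obtain ⟨d, hd⟩ := F.wf
    refine ⟨d, ?_⟩
    intro v hv p hp
    beta_reduce at hp
    cases h : F.parent v with
    | none => rw [h] at hp; simp at hp
    | some q =>
      rw [h] at hp
      simp only [Option.bind_some] at hp
      split at hp
      · rename_i hc; cases hp
        exact hd v (Finset.mem_inter.mp hv).2 _ h
      · simp at hp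

/-- The root part `R_C(F) = F/P_C(F)` determined by the severed vertex set `S`. -/
def quot (F : Forest) (S : Finset ℕ) : Forest where
  verts := F.verts \ S
  parent v := (F.parent v).bind fun p =>
    if v ∈ F.verts \ S ∧ p ∈ F.verts \ S then some p else none
  parent_mem := by
    intro v hv p hp
    beta_reduce at hp
    cases h : F.parent v with
    | none => rw [h] at hp; simp at hp
    | some q =>
      rw [h] at hp
      simp only [Option.bind_some] at hp
      split at hp
      · rename_i hc; cases hp; exact hc.2
      · simp at hp
  wf := by
    obtain ⟨d, hd⟩ := F.wf
    refine ⟨d, ?_⟩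
    intro v hv p hp
    beta_reduce at hp
    cases h : F.parent v with
    | none => rw [h] at hp; simp at hp
    | some q =>
      rw [h] at hp
      simp only [Option.bind_some] at hp
      split at hp
      · rename_i hc; cases hp
        exact hd v (Finset.mem_sdiff.mp hv).1 _ h
      · simp at hp

/-- `φ` realizes an isomorphism of labeled rooted forests (a root- and
incidence-preserving bijection on labels). -/
def IsoMap (F G : Forest) (φ : ℕ → ℕ) : Prop :=
  Set.BijOn φ (F.verts : Set ℕ) (G.verts : Set ℕ) ∧
    ∀ v ∈ F.verts, (F.parent v).map φ = G.parent (φ v)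

/-- Isomorphism of labeled rooted forests. -/
def Iso (F G : Forest) : Prop := ∃ φ, IsoMap F G φ

/-- A function on forests which only depends on the isomorphism class. -/
def Invariant (f : Forest → ℚ) : Prop := ∀ F G, Iso F G → f F = f G

/-- A function on forests supported on finitely many isomorphism classes. -/
def FinSupp (f : Forest → ℚ) : Prop :=
  ∃ s : Finset Forest, ∀ F, f F ≠ 0 → ∃ G ∈ s, Iso F G

/-- The Ringel-Hall convolution product:
`(f × g)(F) = ∑_{G ⊆ F} f(G) · g(F/G)`, the sum running over subforests of `F`. -/
def conv (f g : Forest → ℚ) : Forest → ℚ := fun F =>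
  ∑ S ∈ F.verts.powerset, if F.IsSub S then f (F.restrict S) * g (F.quot S) else 0

end Forest

end

namespace Forest

/-- A (raw) morphism datum in the category `LRF`: a triple `(C₁, C₂, f)`. -/
structure Mor where
  cut1 : Finset ℕ
  cut2 : Finset ℕ
  map : ℕ → ℕ

/-- `(C₁, C₂, f)` is a morphism `F → G` in `LRF`: `C₁` is an admissible cut of `F`
(recorded by the severed vertex set), `C₂` one of `G`, and `f` an isomorphism
`R_{C₁}(F) ≅ P_{C₂}(G)`. -/
def IsMor (F G : Forest) (m : Mor) : Prop :=
  F.IsSub m.cut1 ∧ G.IsSub m.cut2 ∧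
    IsoMap (F.quot m.cut1) (G.restrict m.cut2) m.map

/-- Composition of morphisms in `LRF` (`m : F → F₂` followed by `n : F₂ → F₃`):
the cut of `n` is pulled back through `m` to a cut `E₁ ≥ C₁` of `F`, and the new
image is the image of `R_{E₁}(F)` under the composite map. -/
noncomputable def Mor.comp (F : Forest) (m n : Mor) : Mor :=
  ⟨m.cut1 ∪ ((F.quot m.cut1).verts.filter fun v => m.map v ∈ n.cut1),
   ((F.quot (m.cut1 ∪ ((F.quot m.cut1).verts.filter fun v => m.map v ∈ n.cut1))).verts).image
     (n.map ∘ m.map),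
   n.map ∘ m.map⟩

/-- The identity morphism `(C_null, C_full, id)` of `F`. -/
def idMor (F : Forest) : Mor := ⟨∅, F.verts, id⟩

/-- Equality of morphisms out of `F` (the map only matters on `R_{C₁}(F)`). -/
def MorEq (F : Forest) (m n : Mor) : Prop :=
  m.cut1 = n.cut1 ∧ m.cut2 = n.cut2 ∧
    ∀ v ∈ (F.quot m.cut1).verts, m.map v = n.map v

/-- The zero morphisms `F → G`: morphisms with empty image (factoring through `∅`). -/
def IsZeroMor (F G : Forest) (m : Mor) : Prop := IsMor F G m ∧ m.cut2 = ∅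

end Forest

/-! A morphism `u : A → F₁` is killed by `(C₁, C₂, f)` exactly when `u` sends the root part of `A`
into the severed branches `P_{C₁}(F₁)`; then the same triple `u` is a morphism into
`P_{C₁}(F₁)`. Post-composing a triple with an inclusion `(C_null, C, id)` returns the same triple,
which gives both the factorization and its uniqueness. -/

namespace Forest

variable {F G A : Forest} {S T : Finset ℕ}

theorem ext (hv : F.verts = G.verts) (hp : F.parent = G.parent) : F = G := by
  cases F; cases G; cases hv; cases hp; rfl

@[simp]
theorem restrict_verts : (F.restrict S).verts = S ∩ F.verts := rfl

@[simp]
theorem quot_verts : (F.quot S).verts = F.verts \ S := rfl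

theorem restrict_parent_eq_some {v p : ℕ} :
    (F.restrict S).parent v = some p ↔
      F.parent v = some p ∧ v ∈ S ∩ F.verts ∧ p ∈ S ∩ F.verts := by
  simp only [restrict, Option.bind_eq_some_iff, Option.ite_none_right_eq_some, Option.some.injEq]
  constructor
  · rintro ⟨q, hq, hvq, rfl⟩
    exact ⟨hq, hvq⟩
  · rintro ⟨hp, hvp⟩
    exact ⟨p, hp, hvp, rfl⟩

theorem quot_empty_parent {v : ℕ} (hv : v ∈ F.verts) : (F.quot ∅).parent v = F.parent v := by
  cases hp : F.parent v with
  | none => simp [quot, hp]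
  | some p => simp [quot, hp, hv, F.parent_mem v hv p hp]

theorem restrict_restrict (hTS : T ⊆ S) : (F.restrict S).restrict T = F.restrict T := by
  refine ext ?_ (funext fun v => Option.ext fun p => ?_)
  · ext x
    simp only [restrict_verts, Finset.mem_inter]
    exact ⟨fun ⟨hT, _, hF⟩ => ⟨hT, hF⟩, fun ⟨hT, hF⟩ => ⟨hT, hTS hT, hF⟩⟩
  · simp only [restrict_parent_eq_some, restrict_verts, Finset.mem_inter]
    grind [Finset.mem_of_subset]

theorem isSub_empty : F.IsSub ∅ :=
  ⟨Finset.empty_subset _, fun _ hv => absurd hv (Finset.notMem_empty _)⟩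

theorem isSub_verts : F.IsSub F.verts :=
  ⟨subset_rfl, fun _ _ _ hw _ => hw⟩

theorem IsSub.restrict (hT : F.IsSub T) (hTS : T ⊆ S) : (F.restrict S).IsSub T := by
  refine ⟨fun x hx => Finset.mem_inter.mpr ⟨hTS hx, hT.1 hx⟩, fun v hv w hw hwv => ?_⟩
  obtain ⟨hwv, -, -⟩ := restrict_parent_eq_some.mp hwv
  exact hT.2 v hv w (Finset.mem_inter.mp hw).2 hwv

theorem isoMap_of_verts_eq_empty (φ : ℕ → ℕ) (hF : F.verts = ∅) (hG : G.verts = ∅) :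
    IsoMap F G φ :=
  ⟨by simp [hF, hG], fun v hv => absurd (hF ▸ hv) (Finset.notMem_empty v)⟩

theorem isoMap_quot_empty_id : IsoMap (F.quot ∅) F id := by
  have hverts : (F.quot ∅).verts = F.verts := Finset.sdiff_empty
  refine ⟨hverts ▸ Set.bijOn_id _, fun v hv => ?_⟩
  rw [quot_empty_parent (hverts ▸ hv), Option.map_id]
  rfl

theorem IsoMap.image_verts {φ : ℕ → ℕ} (h : IsoMap F G φ) : F.verts.image φ = G.verts := by
  rw [← Finset.coe_inj, Finset.coe_image]
  exact h.1.image_eq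

namespace Mor

theorem comp_cut2_eq_empty_iff (m n : Mor) :
    (comp A m n).cut2 = ∅ ↔ ∀ v ∈ (A.quot m.cut1).verts, m.map v ∈ n.cut1 := by
  simp only [comp, Finset.image_eq_empty, quot_verts, Finset.sdiff_eq_empty_iff_subset,
    Finset.subset_iff, Finset.mem_union, Finset.mem_filter, Finset.mem_sdiff]
  grind

end Mor

theorem IsMor.image_map {u : Mor} (hu : IsMor A F u) :
    (A.quot u.cut1).verts.image u.map = u.cut2 := by
  rw [hu.2.2.image_verts, restrict_verts, Finset.inter_eq_left.mpr hu.2.1.1]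

theorem MorEq.symm {m n : Mor} (h : MorEq A m n) : MorEq A n m :=
  ⟨h.1.symm, h.2.1.symm, fun v hv => (h.2.2 v (h.1 ▸ hv)).symm⟩

theorem MorEq.trans {l m n : Mor} (hlm : MorEq A l m) (hmn : MorEq A m n) : MorEq A l n :=
  ⟨hlm.1.trans hmn.1, hlm.2.1.trans hmn.2.1,
    fun v hv => (hlm.2.2 v hv).trans (hmn.2.2 v (hlm.1 ▸ hv))⟩

theorem isMor_inclusion (hS : F.IsSub S) : IsMor (F.restrict S) F ⟨∅, S, id⟩ :=
  ⟨isSub_empty, hS, isoMap_quot_empty_id⟩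

theorem IsMor.comp_inclusion {u : Mor} (hu : IsMor A G u) :
    MorEq A (Mor.comp A u ⟨∅, S, id⟩) u := by
  have hcut1 : (Mor.comp A u ⟨∅, S, id⟩).cut1 = u.cut1 := by simp [Mor.comp]
  refine ⟨hcut1, ?_, fun v _ => rfl⟩
  simp only [Mor.comp] at hcut1 ⊢
  rw [hcut1, Function.id_comp, hu.image_map]

theorem isZeroMor_of_cut1_eq_verts {z : Mor} (h1 : z.cut1 = F.verts) (h2 : z.cut2 = ∅) :
    IsZeroMor F G z := by
  refine ⟨⟨h1 ▸ isSub_verts, h2 ▸ isSub_empty, ?_⟩, h2⟩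
  rw [h1, h2]
  exact isoMap_of_verts_eq_empty _ (Finset.sdiff_self _) (Finset.empty_inter _)

theorem isZeroMor_inclusion_comp (m : Mor) :
    IsZeroMor (F.restrict m.cut1) G (Mor.comp (F.restrict m.cut1) ⟨∅, m.cut1, id⟩ m) := by
  have hcut1 :
      (Mor.comp (F.restrict m.cut1) ⟨∅, m.cut1, id⟩ m).cut1 = (F.restrict m.cut1).verts := by
    simp only [Mor.comp, Finset.empty_union, quot_verts, Finset.sdiff_empty, id]
    exact Finset.filter_true_of_mem fun v hv => (Finset.mem_inter.mp hv).1
  refine isZeroMor_of_cut1_eq_verts hcut1 ?_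
  simp only [Mor.comp] at hcut1 ⊢
  rw [hcut1, quot_verts, Finset.sdiff_self, Finset.image_empty]

theorem IsMor.corestrict {u : Mor} (hu : IsMor A F u)
    (hmaps : ∀ v ∈ (A.quot u.cut1).verts, u.map v ∈ S) : IsMor A (F.restrict S) u := by
  have hcut2 : u.cut2 ⊆ S := by
    rw [← hu.image_map]
    intro x hx
    obtain ⟨v, hv, rfl⟩ := Finset.mem_image.mp hx
    exact hmaps v hv
  exact ⟨hu.1, hu.2.1.restrict hcut2, (restrict_restrict hcut2).symm ▸ hu.2.2⟩

end Forest

open Forest in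
/-- In `LRF`, every morphism `(C₁, C₂, f) : F₁ → F₂` has a kernel,
namely the inclusion `(C_null, C₁, id) : P_{C₁}(F₁) → F₁`: its composite with the
morphism is zero, and every morphism into `F₁` killed by the morphism factors
uniquely through it. -/
theorem LRF_has_kernels (F1 F2 : Forest) (m : Mor) (hm : IsMor F1 F2 m) :
    IsMor (F1.restrict m.cut1) F1 (⟨∅, m.cut1, id⟩ : Mor) ∧
    IsZeroMor (F1.restrict m.cut1) F2
      (Mor.comp (F1.restrict m.cut1) (⟨∅, m.cut1, id⟩ : Mor) m) ∧
    (∀ (A : Forest) (u : Mor), IsMor A F1 u → IsZeroMor A F2 (Mor.comp A u m) →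
      ∃ w : Mor, IsMor A (F1.restrict m.cut1) w ∧
        MorEq A (Mor.comp A w (⟨∅, m.cut1, id⟩ : Mor)) u ∧
        ∀ w' : Mor, IsMor A (F1.restrict m.cut1) w' →
          MorEq A (Mor.comp A w' (⟨∅, m.cut1, id⟩ : Mor)) u → MorEq A w w') := by
  refine ⟨isMor_inclusion hm.1, isZeroMor_inclusion_comp m, fun A u hu hzero => ?_⟩
  have hu' : IsMor A (F1.restrict m.cut1) u :=
    hu.corestrict ((Mor.comp_cut2_eq_empty_iff u m).mp hzero.2)
  exact ⟨u, hu', hu.comp_inclusion, fun w hw hwu => (hw.comp_inclusion.symm.trans hwu).symm⟩
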